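/- arXiv:math/0411366 — 6 statements merged into one kernel-verified Lean document; each statement's English description precedes it below -/
import Mathlib

section
/- Let (f_i)_{i∈I} be a family in Q and y an object such that y⊗(⨆ᵢ f_i) and all y⊗f_i exist. Then y⊗(⨆ᵢ f_i) is a least upper bound of the family (y⊗f_i) in the underlying preorder of C. -/
/-- Left residuation in a quantale: `lres a f = sSup {h | h * f ≤ a}` (i.e. `a ⇦ f`). -/
def lres {Q : Type*} [CompleteLattice Q] [Monoid Q] (a f : Q) : Q := sSup {h | h * f ≤ a}

/-- Right residuation in a quantale: `rres f a = sSup {h | f * h ≤ a}` (i.e. `f ⇨ a`). -/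
def rres {Q : Type*} [CompleteLattice Q] [Monoid Q] (f a : Q) : Q := sSup {h | f * h ≤ a}

theorem stmt2 {Q : Type*} [CompleteLattice Q] [Monoid Q]
    (hd₁ : ∀ (f : Q) (S : Set Q), f * sSup S = ⨆ a ∈ S, f * a)
    (hd₂ : ∀ (f : Q) (S : Set Q), sSup S * f = ⨆ a ∈ S, a * f)
    {C : Type*}
    (hom : C → C → Q)
    (hrefl : ∀ x, 1 ≤ hom x x)
    (hcomp : ∀ x y z, hom y z * hom x y ≤ hom x z)
    {I : Type*} (f : I → Q) (y t : C) (c : I → C)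
    (ht : ∀ z, hom t z = lres (hom y z) (⨆ i, f i))
    (hc : ∀ i z, hom (c i) z = lres (hom y z) (f i)) :
    (∀ i, 1 ≤ hom (c i) t) ∧ ∀ u, (∀ i, 1 ≤ hom (c i) u) → 1 ≤ hom t u := by
  -- monotonicity of multiplication on the left argument
  have mono : ∀ (g : Q) {h h' : Q}, h ≤ h' → h * g ≤ h' * g := by
    intro g h h' hh
    have hs : sSup {h, h'} = h' := by rw [sSup_pair, sup_eq_right.mpr hh]
    calc h * g ≤ ⨆ a ∈ ({h, h'} : Set Q), a * g :=
          le_iSup₂ (f := fun (a : Q) (_ : a ∈ ({h, h'} : Set Q)) => a * g) h (by simp)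
      _ = sSup {h, h'} * g := (hd₂ g _).symm
      _ = h' * g := by rw [hs]
  -- adjunction
  have adj : ∀ (a g h : Q), h * g ≤ a ↔ h ≤ lres a g := by
    intro a g h
    constructor
    · intro hle; exact le_sSup hle
    · intro hle
      calc h * g ≤ lres a g * g := mono g hle
        _ = ⨆ b ∈ {h' | h' * g ≤ a}, b * g := hd₂ g _
        _ ≤ a := iSup₂_le fun b hb => hb
  -- key: ⨆ f ≤ hom y t
  have hyt : (⨆ i, f i) ≤ hom y t := by
    have h1 : (1 : Q) ≤ lres (hom y t) (⨆ i, f i) := (ht t) ▸ hrefl t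
    have := (adj (hom y t) (⨆ i, f i) 1).mpr h1
    simpa using this
  refine ⟨fun i => ?_, fun u hu => ?_⟩
  · rw [hc i t]
    refine (adj _ _ _).mp ?_
    simpa using (le_iSup f i).trans hyt
  · rw [ht u]
    refine (adj _ _ _).mp ?_
    rw [one_mul]
    refine iSup_le fun i => ?_
    have h1 : (1 : Q) ≤ lres (hom y u) (f i) := (hc i u) ▸ hu i
    simpa using (adj (hom y u) (f i) 1).mpr h1
end

section
/- Let C be a cotensored Q-category and (c_i)_{i∈I} a family of objects with a least upper bound c in the underlying preorder of C. Then hom(c, z) = ⨅ᵢ hom(c_i, z) for every object z; that is, suprema in the underlying preorder of a cotensored Q-category are conical colimits. -/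
theorem stmt9 {Q : Type*} [CompleteLattice Q] [Monoid Q]
    (hd₁ : ∀ (f : Q) (S : Set Q), f * sSup S = ⨆ a ∈ S, f * a)
    (hd₂ : ∀ (f : Q) (S : Set Q), sSup S * f = ⨆ a ∈ S, a * f)
    {C : Type*}
    (hom : C → C → Q)
    (hrefl : ∀ x, 1 ≤ hom x x)
    (hcomp : ∀ x y z, hom y z * hom x y ≤ hom x z)
    (cot : Q → C → C)
    (hcot : ∀ (f : Q) (x z : C), hom z (cot f x) = rres f (hom z x))
    {I : Type*} (c : I → C) (s : C)
    (hub : ∀ i, 1 ≤ hom (c i) s)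
    (hlub : ∀ u, (∀ i, 1 ≤ hom (c i) u) → 1 ≤ hom s u) :
    ∀ z, hom s z = ⨅ i, hom (c i) z := by
  intro z
  have mono : ∀ f a b : Q, a ≤ b → f * a ≤ f * b := by
    intro f a b hab
    have : sSup {a, b} = b := by
      rw [sSup_pair, sup_eq_right.mpr hab]
    calc f * a ≤ ⨆ x ∈ ({a, b} : Set Q), f * x :=
          le_iSup₂ (f := fun x (_ : x ∈ ({a,b}:Set Q)) => f * x) a (by simp)
    _ = f * sSup {a, b} := (hd₁ f _).symm
    _ = f * b := by rw [this]
  have mul_rres_le : ∀ f a : Q, f * rres f a ≤ a := by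
    intro f a
    rw [rres, hd₁]
    exact iSup₂_le fun h hh => hh
  apply le_antisymm
  · refine le_iInf fun i => ?_
    calc hom s z = hom s z * 1 := by rw [mul_one]
    _ ≤ hom s z * hom (c i) s := by
        exact mono _ _ _ (hub i)
    _ ≤ hom (c i) z := hcomp _ _ _
  · set f := ⨅ i, hom (c i) z with hf
    have h1 : 1 ≤ hom s (cot f z) := by
      apply hlub
      intro i
      rw [hcot]
      apply le_sSup
      simp only [Set.mem_setOf_eq, mul_one]
      exact iInf_le _ i
    rw [hcot] at h1
    calc f = f * 1 := (mul_one f).symm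
    _ ≤ f * rres f (hom s z) := mono _ _ _ h1
    _ ≤ hom s z := mul_rres_le _ _
end

section
/- Let C be a tensored and cotensored Q-category whose underlying preorder admits least upper bounds of all families. Then C is cocomplete: for every presheaf φ : C → Q (satisfying φ(x) * hom(x', x) ≤ φ(x')) there exists an object c with hom(c, z) = ⨅_{x∈C} (hom(x, z) ⇦ φ(x)) for all z; indeed c may be taken to be the least upper bound of the family (x ⊗ φ(x))_{x∈C} in the underlying preorder. -/
lemma mul_le_mul_r {Q : Type*} [CompleteLattice Q] [Monoid Q]
    (hd₂ : ∀ (f : Q) (S : Set Q), sSup S * f = ⨆ a ∈ S, a * f)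
    {a b : Q} (hab : a ≤ b) (f : Q) : a * f ≤ b * f := by
  have : ({a, b} : Set Q).Nonempty := ⟨a, by simp⟩
  have hb : sSup ({a, b} : Set Q) = b := by
    simp [sSup_pair, sup_eq_right.mpr hab]
  calc a * f ≤ ⨆ g ∈ ({a, b} : Set Q), g * f := le_iSup₂ (f := fun g _ => g * f) a (Set.mem_insert a _)
  _ = sSup ({a, b} : Set Q) * f := (hd₂ f _).symm
  _ = b * f := by rw [hb]

lemma mul_le_mul_l {Q : Type*} [CompleteLattice Q] [Monoid Q]
    (hd₁ : ∀ (f : Q) (S : Set Q), f * sSup S = ⨆ a ∈ S, f * a)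
    {a b : Q} (hab : a ≤ b) (f : Q) : f * a ≤ f * b := by
  have hb : sSup ({a, b} : Set Q) = b := by
    simp [sSup_pair, sup_eq_right.mpr hab]
  calc f * a ≤ ⨆ g ∈ ({a, b} : Set Q), f * g := le_iSup₂ (f := fun g _ => f * g) a (Set.mem_insert a _)
  _ = f * sSup ({a, b} : Set Q) := (hd₁ f _).symm
  _ = f * b := by rw [hb]

lemma le_lres_iff {Q : Type*} [CompleteLattice Q] [Monoid Q]
    (hd₂ : ∀ (f : Q) (S : Set Q), sSup S * f = ⨆ a ∈ S, a * f)
    {h a f : Q} : h ≤ lres a f ↔ h * f ≤ a := by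
  constructor
  · intro hl
    calc h * f ≤ lres a f * f := mul_le_mul_r hd₂ hl f
    _ = ⨆ g ∈ {h | h * f ≤ a}, g * f := hd₂ f _
    _ ≤ a := by exact iSup₂_le fun g hg => hg
  · intro hl
    exact le_sSup hl

lemma le_rres_iff {Q : Type*} [CompleteLattice Q] [Monoid Q]
    (hd₁ : ∀ (f : Q) (S : Set Q), f * sSup S = ⨆ a ∈ S, f * a)
    {h a f : Q} : h ≤ rres f a ↔ f * h ≤ a := by
  constructor
  · intro hl
    calc f * h ≤ f * rres f a := mul_le_mul_l hd₁ hl f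
    _ = ⨆ g ∈ {h | f * h ≤ a}, f * g := hd₁ f _
    _ ≤ a := by exact iSup₂_le fun g hg => hg
  · intro hl
    exact le_sSup hl

theorem stmt12 {Q : Type*} [CompleteLattice Q] [Monoid Q]
    (hd₁ : ∀ (f : Q) (S : Set Q), f * sSup S = ⨆ a ∈ S, f * a)
    (hd₂ : ∀ (f : Q) (S : Set Q), sSup S * f = ⨆ a ∈ S, a * f)
    {C : Type}
    (hom : C → C → Q)
    (hrefl : ∀ x, 1 ≤ hom x x)
    (hcomp : ∀ x y z, hom y z * hom x y ≤ hom x z)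
    (ten : C → Q → C)
    (hten : ∀ (y : C) (f : Q) (z : C), hom (ten y f) z = lres (hom y z) f)
    (cot : Q → C → C)
    (hcot : ∀ (f : Q) (x z : C), hom z (cot f x) = rres f (hom z x))
    (hsup : ∀ {I : Type} (c : I → C), ∃ s : C,
       (∀ i, 1 ≤ hom (c i) s) ∧ ∀ u, (∀ i, 1 ≤ hom (c i) u) → 1 ≤ hom s u) :
    ∀ φ : C → Q, (∀ x x', φ x * hom x' x ≤ φ x') →
      ∃ c : C, ((∀ x, 1 ≤ hom (ten x (φ x)) c) ∧
                 ∀ u, (∀ x, 1 ≤ hom (ten x (φ x)) u) → 1 ≤ hom c u) ∧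
               (∀ z, hom c z = ⨅ x : C, lres (hom x z) (φ x)) := by
  intro φ hφ
  obtain ⟨c, hc1, hc2⟩ := hsup (fun x : C => ten x (φ x))
  refine ⟨c, ⟨hc1, hc2⟩, fun z => le_antisymm ?_ ?_⟩
  · refine le_iInf fun x => ?_
    rw [← hten]
    calc hom c z = hom c z * 1 := (mul_one _).symm
    _ ≤ hom c z * hom (ten x (φ x)) c := mul_le_mul_l hd₁ (hc1 x) _
    _ ≤ hom (ten x (φ x)) z := hcomp _ _ _
  · set h := ⨅ x : C, lres (hom x z) (φ x) with hh
    have key : 1 ≤ hom c (cot h z) := by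
      apply hc2
      intro x
      rw [hten, le_lres_iff hd₂, one_mul, hcot, le_rres_iff hd₁,
        ← le_lres_iff hd₂]
      exact iInf_le _ x
    rw [hcot, le_rres_iff hd₁] at key
    calc h = h * 1 := (mul_one _).symm
    _ ≤ h * hom c (cot h z) := mul_le_mul_l hd₁ (by rw [hcot]; exact le_sSup key) _
    _ ≤ hom c z := by
        rw [hcot]
        calc h * rres h (hom c z) = ⨆ g ∈ {g | h * g ≤ hom c z}, h * g := hd₁ h _
        _ ≤ hom c z := iSup₂_le fun g hg => hg
end

section
/- Let A and B be Q-categories with A tensored, and let F : A → B be a Q-functor (hom_A(a', a) ≤ hom_B(F a', F a)). Suppose (i) F preserves tensors: F(a⊗f) is isomorphic to (F a)⊗f in the underlying preorder of B whenever both exist, and all tensors (F a)⊗f exist in B on the relevant objects, and (ii) F has a right adjoint G₀ : B → A as a monotone map between the underlying preorders (F a ≤ b ↔ a ≤ G₀ b). Then G₀ is itself a Q-functor and is an enriched right adjoint of F: hom_B(F a, b) = hom_A(a, G₀ b) for all a ∈ A, b ∈ B. -/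
theorem stmt13 {Q : Type*} [CompleteLattice Q] [Monoid Q]
    (hd₁ : ∀ (f : Q) (S : Set Q), f * sSup S = ⨆ a ∈ S, f * a)
    (hd₂ : ∀ (f : Q) (S : Set Q), sSup S * f = ⨆ a ∈ S, a * f)
    {A B : Type*}
    (homA : A → A → Q)
    (hreflA : ∀ x, 1 ≤ homA x x)
    (hcompA : ∀ x y z, homA y z * homA x y ≤ homA x z)
    (homB : B → B → Q)
    (hreflB : ∀ x, 1 ≤ homB x x)
    (hcompB : ∀ x y z, homB y z * homB x y ≤ homB x z)
    (tenA : A → Q → A)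
    (htenA : ∀ (a : A) (f : Q) (z : A), homA (tenA a f) z = lres (homA a z) f)
    (F : A → B)
    (hF : ∀ a' a, homA a' a ≤ homB (F a') (F a))
    -- all tensors (F a) ⊗ f exist in B:
    (tenB : A → Q → B)
    (htenB : ∀ (a : A) (f : Q) (z : B), homB (tenB a f) z = lres (homB (F a) z) f)
    -- F preserves tensors:
    (hpres : ∀ (a : A) (f : Q),
       1 ≤ homB (F (tenA a f)) (tenB a f) ∧ 1 ≤ homB (tenB a f) (F (tenA a f)))
    -- F ⊣ G₀ between the underlying preorders:
    (G₀ : B → A)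
    (hadj : ∀ (a : A) (b : B), 1 ≤ homB (F a) b ↔ 1 ≤ homA a (G₀ b)) :
    (∀ b' b, homB b' b ≤ homA (G₀ b') (G₀ b)) ∧
    (∀ (a : A) (b : B), homB (F a) b = homA a (G₀ b)) := by
  -- multiplication is monotone in each variable
  have mono_r : ∀ {a a' : Q} (f : Q), a ≤ a' → a * f ≤ a' * f := by
    intro a a' f h
    have : a * f ≤ ⨆ x ∈ ({a, a'} : Set Q), x * f :=
      le_biSup (fun x => x * f) (by simp)
    rw [← hd₂] at this
    simpa [sup_eq_right.mpr h] using this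
  have mono_l : ∀ (f : Q) {a a' : Q}, a ≤ a' → f * a ≤ f * a' := by
    intro f a a' h
    have : f * a ≤ ⨆ x ∈ ({a, a'} : Set Q), f * x :=
      le_biSup (fun x => f * x) (by simp)
    rw [← hd₁] at this
    simpa [sup_eq_right.mpr h] using this
  -- residuation adjunction
  have lres_adj : ∀ h f a : Q, h * f ≤ a ↔ h ≤ lres a f := by
    intro h f a
    constructor
    · intro hh; exact le_sSup hh
    · intro hh
      have h1 : h * f ≤ lres a f * f := mono_r f hh
      have h2 : lres a f * f ≤ a := by
        rw [lres, hd₂]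
        exact iSup₂_le fun x hx => hx
      exact h1.trans h2
  -- counit: 1 ≤ homB (F (G₀ b)) b
  have counit : ∀ b : B, 1 ≤ homB (F (G₀ b)) b := fun b =>
    (hadj (G₀ b) b).mpr (hreflA (G₀ b))
  -- main inequality: homB (F a) b ≤ homA a (G₀ b)
  have key₁ : ∀ (a : A) (b : B), homB (F a) b ≤ homA a (G₀ b) := by
    intro a b
    set f := homB (F a) b with hf
    -- 1 ≤ homB (tenB a f) b
    have h1 : 1 ≤ homB (tenB a f) b := by
      rw [htenB, ← lres_adj, one_mul]
    -- 1 ≤ homB (F (tenA a f)) b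
    have h2 : 1 ≤ homB (F (tenA a f)) b := by
      calc (1 : Q) = 1 * 1 := (one_mul 1).symm
        _ ≤ homB (tenB a f) b * homB (F (tenA a f)) (tenB a f) :=
            le_trans (mono_r 1 h1) (mono_l _ (hpres a f).1)
        _ ≤ homB (F (tenA a f)) b := hcompB _ _ _
    have h3 : 1 ≤ homA (tenA a f) (G₀ b) := (hadj _ _).mp h2
    rw [htenA, ← lres_adj, one_mul] at h3
    exact h3
  have key₂ : ∀ (a : A) (b : B), homA a (G₀ b) ≤ homB (F a) b := by
    intro a b
    calc homA a (G₀ b) ≤ homB (F a) (F (G₀ b)) := hF _ _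
      _ = 1 * homB (F a) (F (G₀ b)) := (one_mul _).symm
      _ ≤ homB (F (G₀ b)) b * homB (F a) (F (G₀ b)) := mono_r _ (counit b)
      _ ≤ homB (F a) b := hcompB _ _ _
  have keq : ∀ (a : A) (b : B), homB (F a) b = homA a (G₀ b) := fun a b =>
    le_antisymm (key₁ a b) (key₂ a b)
  refine ⟨fun b' b => ?_, keq⟩
  rw [← keq]
  calc homB b' b = homB b' b * 1 := (mul_one _).symm
    _ ≤ homB b' b * homB (F (G₀ b')) b' := mono_l _ (counit b')
    _ ≤ homB (F (G₀ b')) b := hcompB _ _ _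
end

section
/- Let C be a tensored Q-category such that for every f ∈ Q the monotone map y ↦ y⊗f on the underlying preorder of C has a right adjoint R_f : C → C (y⊗f ≤ x ↔ y ≤ R_f(x)). Then C is cotensored, with R_f(x) satisfying the cotensor universal property: hom(z, R_f(x)) = f ⇨ hom(z, x) for all objects z. -/
theorem stmt14 {Q : Type*} [CompleteLattice Q] [Monoid Q]
    (hd₁ : ∀ (f : Q) (S : Set Q), f * sSup S = ⨆ a ∈ S, f * a)
    (hd₂ : ∀ (f : Q) (S : Set Q), sSup S * f = ⨆ a ∈ S, a * f)
    {C : Type*}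
    (hom : C → C → Q)
    (hrefl : ∀ x, 1 ≤ hom x x)
    (hcomp : ∀ x y z, hom y z * hom x y ≤ hom x z)
    (ten : C → Q → C)
    (hten : ∀ (y : C) (f : Q) (z : C), hom (ten y f) z = lres (hom y z) f)
    (R : Q → C → C)
    (hR : ∀ (f : Q) (y x : C), 1 ≤ hom (ten y f) x ↔ 1 ≤ hom y (R f x)) :
    ∀ (f : Q) (x z : C), hom z (R f x) = rres f (hom z x) := by
  have mulr : ∀ {h h' : Q} (f : Q), h ≤ h' → h * f ≤ h' * f := by
    intro h h' f hh
    have e : h' * f = ⨆ a ∈ ({h, h'} : Set Q), a * f := by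
      rw [← hd₂, sSup_pair, sup_eq_right.mpr hh]
    rw [e]; exact le_iSup₂ (f := fun a _ => a * f) h (by simp)
  have mull : ∀ {h h' : Q} (f : Q), h ≤ h' → f * h ≤ f * h' := by
    intro h h' f hh
    have e : f * h' = ⨆ a ∈ ({h, h'} : Set Q), f * a := by
      rw [← hd₁, sSup_pair, sup_eq_right.mpr hh]
    rw [e]; exact le_iSup₂ (f := fun a _ => f * a) h (by simp)
  have lres_adj : ∀ h f a : Q, h * f ≤ a ↔ h ≤ lres a f := by
    intro h f a
    constructor
    · intro hh; exact le_sSup hh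
    · intro hh
      calc h * f ≤ lres a f * f := mulr f hh
        _ = ⨆ b ∈ {h | h * f ≤ a}, b * f := hd₂ f _
        _ ≤ a := iSup₂_le fun b hb => hb
  have rres_adj : ∀ h f a : Q, f * h ≤ a ↔ h ≤ rres f a := by
    intro h f a
    constructor
    · intro hh; exact le_sSup hh
    · intro hh
      calc f * h ≤ f * rres f a := mull f hh
        _ = ⨆ b ∈ {h | f * h ≤ a}, f * b := hd₁ f _
        _ ≤ a := iSup₂_le fun b hb => hb
  have key : ∀ (f : Q) (x z : C) (g : Q),
      g ≤ hom z (R f x) ↔ g ≤ rres f (hom z x) := by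
    intro f x z g
    calc g ≤ hom z (R f x) ↔ 1 * g ≤ hom z (R f x) := by rw [one_mul]
      _ ↔ 1 ≤ lres (hom z (R f x)) g := lres_adj 1 g _
      _ ↔ 1 ≤ hom (ten z g) (R f x) := by rw [hten]
      _ ↔ 1 ≤ hom (ten (ten z g) f) x := (hR f (ten z g) x).symm
      _ ↔ 1 ≤ lres (hom (ten z g) x) f := by rw [hten]
      _ ↔ 1 * f ≤ hom (ten z g) x := (lres_adj 1 f _).symm
      _ ↔ f ≤ lres (hom z x) g := by rw [one_mul, hten]
      _ ↔ f * g ≤ hom z x := (lres_adj f g _).symm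
      _ ↔ g ≤ rres f (hom z x) := rres_adj g f _
  intro f x z
  exact le_antisymm ((key f x z _).mp le_rfl) ((key f x z _).mpr le_rfl)
end

section
/- Let C be a tensored Q-category. A type-preserving map F from C to a tensored Q-category C' (given as a function on objects) is a Q-functor (i.e., hom(y, x) ≤ hom'(F y, F x) for all x, y) if and only if F is monotone for the underlying preorders and satisfies (F y)⊗f ≤ F(y⊗f) in the underlying preorder of C', for all objects y and all f ∈ Q. -/
lemma mul_right_mono'' {Q : Type*} [CompleteLattice Q] [Monoid Q]
    (hd₂ : ∀ (f : Q) (S : Set Q), sSup S * f = ⨆ a ∈ S, a * f)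
    {h g : Q} (hle : h ≤ g) (f : Q) : h * f ≤ g * f := by
  have : g = sSup {h, g} := by
    rw [sSup_pair, sup_eq_right.mpr hle]
  rw [this, hd₂]
  exact le_biSup (fun a => a * f) (Set.mem_insert h {g})

lemma mul_left_mono'' {Q : Type*} [CompleteLattice Q] [Monoid Q]
    (hd₁ : ∀ (f : Q) (S : Set Q), f * sSup S = ⨆ a ∈ S, f * a)
    {h g : Q} (hle : h ≤ g) (f : Q) : f * h ≤ f * g := by
  have : g = sSup {h, g} := by
    rw [sSup_pair, sup_eq_right.mpr hle]
  rw [this, hd₁]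
  exact le_biSup (fun a => f * a) (Set.mem_insert h {g})

lemma lres_adj {Q : Type*} [CompleteLattice Q] [Monoid Q]
    (hd₂ : ∀ (f : Q) (S : Set Q), sSup S * f = ⨆ a ∈ S, a * f)
    (a f h : Q) : h ≤ lres a f ↔ h * f ≤ a := by
  constructor
  · intro hle
    calc h * f ≤ lres a f * f := mul_right_mono'' hd₂ hle f
      _ = ⨆ g ∈ {g : Q | g * f ≤ a}, g * f := hd₂ f _
      _ ≤ a := by
          apply iSup_le; intro g; apply iSup_le; intro hg; exact hg
  · intro hle
    exact le_sSup hle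

theorem stmt19 {Q : Type*} [CompleteLattice Q] [Monoid Q]
    (hd₁ : ∀ (f : Q) (S : Set Q), f * sSup S = ⨆ a ∈ S, f * a)
    (hd₂ : ∀ (f : Q) (S : Set Q), sSup S * f = ⨆ a ∈ S, a * f)
    {C C' : Type*}
    (hom : C → C → Q)
    (hrefl : ∀ x, 1 ≤ hom x x)
    (hcomp : ∀ x y z, hom y z * hom x y ≤ hom x z)
    (hom' : C' → C' → Q)
    (hrefl' : ∀ x, 1 ≤ hom' x x)
    (hcomp' : ∀ x y z, hom' y z * hom' x y ≤ hom' x z)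
    (ten : C → Q → C)
    (hten : ∀ (y : C) (f : Q) (z : C), hom (ten y f) z = lres (hom y z) f)
    (ten' : C' → Q → C')
    (hten' : ∀ (y : C') (f : Q) (z : C'), hom' (ten' y f) z = lres (hom' y z) f)
    (F : C → C') :
    (∀ y x : C, hom y x ≤ hom' (F y) (F x)) ↔
    ((∀ y x : C, 1 ≤ hom y x → 1 ≤ hom' (F y) (F x)) ∧
     (∀ (y : C) (f : Q), 1 ≤ hom' (ten' (F y) f) (F (ten y f)))) := by
  constructor
  · intro hF
    refine ⟨fun y x h => h.trans (hF y x), fun y f => ?_⟩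
    rw [hten', lres_adj hd₂, one_mul]
    have h1 : (1 : Q) * f ≤ hom y (ten y f) := by
      rw [← lres_adj hd₂, ← hten]; exact hrefl _
    rw [one_mul] at h1
    exact h1.trans (hF y (ten y f))
  · rintro ⟨hmono, hlax⟩ y x
    set f := hom y x with hf
    have h1 : (1 : Q) ≤ hom (ten y f) x := by
      rw [hten, lres_adj hd₂, one_mul]
    have h2 : (1 : Q) ≤ hom' (F (ten y f)) (F x) := hmono _ _ h1
    have h3 : (1 : Q) ≤ hom' (ten' (F y) f) (F x) := by
      calc (1 : Q) = 1 * 1 := (one_mul 1).symm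
        _ ≤ hom' (F (ten y f)) (F x) * 1 :=
            mul_right_mono'' hd₂ h2 1
        _ ≤ hom' (F (ten y f)) (F x) * hom' (ten' (F y) f) (F (ten y f)) :=
            mul_left_mono'' hd₁ (hlax y f) _
        _ ≤ hom' (ten' (F y) f) (F x) := hcomp' _ _ _
    rw [hten', lres_adj hd₂, one_mul] at h3
    exact h3
end
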